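/- For p > 1, the inequality (p−1)·(σ_1^{p−2} + σ_2^{p−2})/2 ≥ (σ_2^{p−1} − σ_1^{p−1})/(σ_2 − σ_1) holds for all σ_1, σ_2 ∈ (0,∞) with σ_1 ≠ σ_2 if and only if p ∈ (1, 2] ∪ [3, ∞). -/

import Mathlib

open Real Set

/-!
The secant slope `(b^(p-1) - a^(p-1)) / (b - a)` is the mean value of `g x = (p-1) x^(p-2)` over
`[a, b]`, and the right-hand side is the trapezoid value `(g a + g b) / 2`. The trapezoid rule
overestimates the mean of a convex function and strictly underestimates that of a strictly
concave one; `x^(p-2)` is convex on `(0, ∞)` when `(p-2)(p-3) ≥ 0`, i.e. `p ≤ 2` or `p ≥ 3`, and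
strictly concave when `2 < p < 3`.
-/

lemma integral_chord_div {a b : ℝ} (hab : a ≠ b) (u v : ℝ) :
    (∫ x in a..b, ((b - x) * u + (x - a) * v) / (b - a)) / (b - a) = (u + v) / 2 := by
  have hba : b - a ≠ 0 := sub_ne_zero.2 hab.symm
  have affine : (fun x ↦ ((b - x) * u + (x - a) * v) / (b - a)) =
      fun x ↦ (b * u - a * v) / (b - a) + (v - u) / (b - a) * x := by
    funext x; field_simp; ring
  rw [affine, intervalIntegral.integral_add intervalIntegrable_const
    (intervalIntegral.intervalIntegrable_id.const_mul _), intervalIntegral.integral_const_mul,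
    intervalIntegral.integral_const, integral_id, smul_eq_mul]
  field_simp
  ring

lemma ConvexOn.le_chord {s : Set ℝ} {g : ℝ → ℝ} (hg : ConvexOn ℝ s g) {a b x : ℝ}
    (ha : a ∈ s) (hb : b ∈ s) (hab : a < b) (hx : x ∈ Icc a b) :
    g x ≤ ((b - x) * g a + (x - a) * g b) / (b - a) := by
  have hba : 0 < b - a := sub_pos.2 hab
  have hcomb : (b - x) / (b - a) * a + (x - a) / (b - a) * b = x := by
    field_simp; ring
  have h := hg.2 ha hb (div_nonneg (sub_nonneg.2 hx.2) hba.le)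
    (div_nonneg (sub_nonneg.2 hx.1) hba.le) (by field_simp; ring)
  simp only [smul_eq_mul, hcomb] at h
  calc g x ≤ _ := h
    _ = _ := by field_simp

lemma ConcaveOn.chord_le {s : Set ℝ} {g : ℝ → ℝ} (hg : ConcaveOn ℝ s g) {a b x : ℝ}
    (ha : a ∈ s) (hb : b ∈ s) (hab : a < b) (hx : x ∈ Icc a b) :
    ((b - x) * g a + (x - a) * g b) / (b - a) ≤ g x := by
  have h := hg.neg.le_chord ha hb hab hx
  simp only [Pi.neg_apply] at h
  linarith [show ((b - x) * -g a + (x - a) * -g b) / (b - a)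
    = -(((b - x) * g a + (x - a) * g b) / (b - a)) by ring]

lemma ConvexOn.integral_div_le_trapezoid {g : ℝ → ℝ} {a b : ℝ} (hab : a < b)
    (hg : ConvexOn ℝ (Icc a b) g) (hc : ContinuousOn g (Icc a b)) :
    (∫ x in a..b, g x) / (b - a) ≤ (g a + g b) / 2 := by
  rw [← integral_chord_div hab.ne]
  gcongr ?_ / _
  refine intervalIntegral.integral_mono_on hab.le (hc.intervalIntegrable_of_Icc hab.le)
    ((by fun_prop : Continuous _).intervalIntegrable a b) fun x hx ↦ ?_
  exact hg.le_chord (left_mem_Icc.2 hab.le) (right_mem_Icc.2 hab.le) hab hx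

lemma StrictConcaveOn.trapezoid_lt_integral_div {g : ℝ → ℝ} {a b : ℝ} (hab : a < b)
    (hg : StrictConcaveOn ℝ (Icc a b) g) (hc : ContinuousOn g (Icc a b)) :
    (g a + g b) / 2 < (∫ x in a..b, g x) / (b - a) := by
  have ha : a ∈ Icc a b := left_mem_Icc.2 hab.le
  have hb : b ∈ Icc a b := right_mem_Icc.2 hab.le
  rw [← integral_chord_div hab.ne]
  gcongr ?_ / _
  refine intervalIntegral.integral_lt_integral_of_continuousOn_of_le_of_exists_lt hab
    (by fun_prop) hc (fun x hx ↦ hg.concaveOn.chord_le ha hb hab (Ioc_subset_Icc_self hx))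
    ⟨(a + b) / 2, ⟨by linarith, by linarith⟩, ?_⟩
  have hmid := hg.2 ha hb hab.ne (by norm_num : (0 : ℝ) < 1 / 2) (by norm_num : (0 : ℝ) < 1 / 2)
    (by norm_num)
  simp only [smul_eq_mul] at hmid
  have hba : b - a ≠ 0 := sub_ne_zero.2 hab.ne'
  rw [show (a + b) / 2 = 1 / 2 * a + 1 / 2 * b by ring]
  calc _ = 1 / 2 * g a + 1 / 2 * g b := by field_simp; ring
    _ < _ := hmid

lemma convexOn_rpow_Ioi {q : ℝ} (hq : 0 ≤ q * (q - 1)) :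
    ConvexOn ℝ (Ioi 0) fun x : ℝ ↦ x ^ q := by
  refine convexOn_of_hasDerivWithinAt2_nonneg (convex_Ioi 0) (f' := fun x ↦ q * x ^ (q - 1))
    (f'' := fun x ↦ q * ((q - 1) * x ^ (q - 1 - 1))) ?_ ?_ ?_ ?_
  · exact fun x hx ↦ (continuousAt_rpow_const x q (Or.inl (ne_of_gt hx))).continuousWithinAt
  all_goals rw [interior_Ioi]
  · exact fun x hx ↦ (hasDerivAt_rpow_const (Or.inl (ne_of_gt hx))).hasDerivWithinAt
  · exact fun x hx ↦ ((hasDerivAt_rpow_const (Or.inl (ne_of_gt hx))).const_mul q).hasDerivWithinAt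
  · intro x hx
    rw [← mul_assoc]
    exact mul_nonneg hq (rpow_nonneg (le_of_lt hx) _)

lemma rpow_secant_eq_integral_div {p a b : ℝ} (hp : 1 < p) :
    (b ^ (p - 1) - a ^ (p - 1)) / (b - a) = (p - 1) * ((∫ x in a..b, x ^ (p - 2)) / (b - a)) := by
  rw [integral_rpow (Or.inl (by linarith)), show p - 2 + 1 = p - 1 by ring]
  field_simp [(sub_pos.2 hp).ne']

lemma rpow_secant_le {p a b : ℝ} (hp : 1 < p) (hpq : 0 ≤ (p - 2) * (p - 3)) (ha : 0 < a)
    (hab : a < b) :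
    (b ^ (p - 1) - a ^ (p - 1)) / (b - a) ≤ (p - 1) * (a ^ (p - 2) + b ^ (p - 2)) / 2 := by
  have hconv : ConvexOn ℝ (Icc a b) fun x : ℝ ↦ x ^ (p - 2) :=
    (convexOn_rpow_Ioi (by linarith)).subset (Icc_subset_Ioi_iff hab.le |>.2 ha) (convex_Icc a b)
  rw [rpow_secant_eq_integral_div hp, mul_div_assoc]
  exact mul_le_mul_of_nonneg_left (hconv.integral_div_le_trapezoid hab
    (continuousOn_id.rpow_const fun x hx ↦ Or.inl (ha.trans_le hx.1).ne')) (by linarith)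

lemma lt_rpow_secant {p a b : ℝ} (hp2 : 2 < p) (hp3 : p < 3) (ha : 0 < a) (hab : a < b) :
    (p - 1) * (a ^ (p - 2) + b ^ (p - 2)) / 2 < (b ^ (p - 1) - a ^ (p - 1)) / (b - a) := by
  have hconc : StrictConcaveOn ℝ (Icc a b) fun x : ℝ ↦ x ^ (p - 2) :=
    (strictConcaveOn_rpow (by linarith) (by linarith)).subset
      (Icc_subset_Ici_iff hab.le |>.2 ha.le) (convex_Icc a b)
  rw [rpow_secant_eq_integral_div (by linarith), mul_div_assoc]
  exact mul_lt_mul_of_pos_left (hconc.trapezoid_lt_integral_div hab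
    (continuousOn_id.rpow_const fun x hx ↦ Or.inl (ha.trans_le hx.1).ne')) (by linarith)

theorem stmt_2 (p : ℝ) (hp : 1 < p) :
    (∀ σ₁ σ₂ : ℝ, 0 < σ₁ → 0 < σ₂ → σ₁ ≠ σ₂ →
        (σ₂ ^ (p - 1) - σ₁ ^ (p - 1)) / (σ₂ - σ₁) ≤
          (p - 1) * (σ₁ ^ (p - 2) + σ₂ ^ (p - 2)) / 2) ↔
      p ∈ Set.Ioc (1:ℝ) 2 ∪ Set.Ici (3:ℝ) := by
  constructor
  · intro H
    by_contra hmem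
    have hp2 : 2 < p := by by_contra! h; exact hmem (Or.inl ⟨hp, h⟩)
    have hp3 : p < 3 := by by_contra! h; exact hmem (Or.inr h)
    exact (lt_rpow_secant hp2 hp3 one_pos one_lt_two).not_ge
      (H 1 2 one_pos two_pos (by norm_num))
  · intro hmem σ₁ σ₂ h₁ h₂ hne
    have hpq : 0 ≤ (p - 2) * (p - 3) := by
      rcases hmem with ⟨-, h⟩ | h
      · nlinarith
      · exact mul_nonneg (by linarith [mem_Ici.1 h]) (by linarith [mem_Ici.1 h])
    rcases hne.lt_or_gt with h | h
    · exact rpow_secant_le hp hpq h₁ h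
    · rw [← neg_div_neg_eq, neg_sub, neg_sub, add_comm]
      exact rpow_secant_le hp hpq h₂ h
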